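/- arXiv:2402.15334 — 6 statements merged into one kernel-verified Lean document; each statement's English description precedes it below -/
import Mathlib

section
/- Let N ≥ 2, let A ∈ ℂ^{N×N} be Hermitian positive definite with eigenvalues λ_0 ≥ λ_1 ≥ ⋯ ≥ λ_{N−1} > 0 (descending, with multiplicity), let b ∈ ℂ^N be a unit vector, and let ξ < 0. Then Θ = A − ξ b bᴴ is positive definite and its condition number κ(Θ) = θ_0/θ_{N−1} satisfies λ_0/λ_{N−2} ≤ κ(Θ) ≤ (λ_0 − ξ)/λ_{N−1}, where θ_0 and θ_{N−1} are respectively the largest and smallest eigenvalues of Θ. -/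
open Matrix
open scoped ComplexOrder

noncomputable section

/-- `l` lists the eigenvalues of the Hermitian matrix `A` (with Hermitian proof `hA`)
in descending order with multiplicity. -/
def IsDescEigListing {N : ℕ} {A : Matrix (Fin N) (Fin N) ℂ}
    (hA : A.IsHermitian) (l : Fin N → ℝ) : Prop :=
  Antitone l ∧ ∃ e : Equiv.Perm (Fin N), ∀ i, l i = hA.eigenvalues (e i)

/-- The condition number of a Hermitian matrix: the ratio of its largest singular value
to its smallest singular value, the singular values being the absolute values of the
eigenvalues. -/
noncomputable def hermCond {N : ℕ} {M : Matrix (Fin N) (Fin N) ℂ}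
    (hM : M.IsHermitian) : ℝ :=
  (⨆ i, |hM.eigenvalues i|) / (⨅ i, |hM.eigenvalues i|)

/-!
Since `ξ < 0`, `Θ = A + |ξ| b bᴴ` and `b bᴴ` is an orthogonal projection, so `A ≤ Θ ≤ A + |ξ| I`
in the Loewner order. The extreme eigenvalues are monotone in that order, which gives
`λ₀ ≤ θ₀ ≤ λ₀ - ξ` and `λ_{N-1} ≤ θ_{N-1}`. For `θ_{N-1} ≤ λ_{N-2}`, pick a nonzero `x ⊥ b` in the
span of the eigenvectors of `λ_{N-2}` and `λ_{N-1}`: there `Θ x = A x`, hence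
`θ_{N-1} ‖x‖² ≤ xᴴ A x ≤ λ_{N-2} ‖x‖²`.
-/

open scoped MatrixOrder

lemma exists_ne_zero_mul_add_mul_eq_zero {K : Type*} [Field K] (p q : K) :
    ∃ α β : K, (α ≠ 0 ∨ β ≠ 0) ∧ α * p + β * q = 0 := by
  by_cases hp : p = 0
  · exact ⟨1, 0, .inl one_ne_zero, by simp [hp]⟩
  · exact ⟨q, -p, .inr (neg_ne_zero.mpr hp), by ring⟩

namespace Matrix

variable {𝕜 : Type*} [RCLike 𝕜] {n : Type*} [Fintype n]

lemma star_dotProduct_mulVec_le_of_le {M M' : Matrix n n 𝕜} (h : M ≤ M') (x : n → 𝕜) :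
    star x ⬝ᵥ (M *ᵥ x) ≤ star x ⬝ᵥ (M' *ᵥ x) := by
  simpa [sub_mulVec, dotProduct_sub] using (le_iff.mp h).dotProduct_mulVec_nonneg x

lemma star_dotProduct_algebraMap_mulVec [DecidableEq n] (c : ℝ) (x : n → 𝕜) :
    star x ⬝ᵥ (algebraMap ℝ (Matrix n n 𝕜) c *ᵥ x) = c * (star x ⬝ᵥ x) := by
  rw [Algebra.algebraMap_eq_smul_one, smul_mulVec, one_mulVec, dotProduct_smul,
    RCLike.real_smul_eq_coe_mul]

lemma isStarProjection_vecMulVec_self_star {b : n → 𝕜} (hb : star b ⬝ᵥ b = 1) :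
    IsStarProjection (vecMulVec b (star b)) where
  isIdempotentElem := by rw [IsIdempotentElem, vecMulVec_mul_vecMulVec, hb, one_smul]
  isSelfAdjoint := (posSemidef_vecMulVec_self_star b).isHermitian

lemma le_add_smul_vecMulVec_self_star (M : Matrix n n 𝕜) {t : ℝ} (ht : 0 ≤ t) (b : n → 𝕜) :
    M ≤ M + (t : 𝕜) • vecMulVec b (star b) := by
  rw [le_iff, add_sub_cancel_left]
  exact (posSemidef_vecMulVec_self_star b).smul (RCLike.ofReal_nonneg.mpr ht)

lemma add_smul_vecMulVec_self_star_le [DecidableEq n] (M : Matrix n n 𝕜) {t : ℝ} (ht : 0 ≤ t)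
    {b : n → 𝕜} (hb : star b ⬝ᵥ b = 1) :
    M + (t : 𝕜) • vecMulVec b (star b) ≤ M + algebraMap ℝ _ t := by
  rw [le_iff, add_sub_add_left_eq_sub, Algebra.algebraMap_eq_smul_one,
    RCLike.real_smul_eq_coe_smul (K := 𝕜), ← smul_sub]
  exact (nonneg_iff_posSemidef.mp (isStarProjection_vecMulVec_self_star hb).one_sub_nonneg).smul
    (RCLike.ofReal_nonneg.mpr ht)

lemma star_smul_add_smul_dotProduct_smul_add_smul {v w : n → 𝕜} (hvv : star v ⬝ᵥ v = 1)
    (hww : star w ⬝ᵥ w = 1) (hvw : star v ⬝ᵥ w = 0) (α β γ δ : 𝕜) :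
    star (α • v + β • w) ⬝ᵥ (γ • v + δ • w) = star α * γ + star β * δ := by
  have hwv : star w ⬝ᵥ v = 0 := by rw [star_dotProduct, hvw, star_zero]
  simp only [star_add, star_smul, add_dotProduct, dotProduct_add, smul_dotProduct,
    dotProduct_smul, hvv, hww, hvw, hwv, smul_eq_mul]
  ring

namespace IsHermitian

variable [DecidableEq n] {M : Matrix n n 𝕜}

lemma le_algebraMap_iff (hM : M.IsHermitian) {c : ℝ} :
    M ≤ algebraMap ℝ _ c ↔ ∀ i, hM.eigenvalues i ≤ c := by
  rw [le_algebraMap_iff_spectrum_le hM.isSelfAdjoint, hM.spectrum_real_eq_range_eigenvalues]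
  simp

lemma algebraMap_le_iff (hM : M.IsHermitian) {c : ℝ} :
    algebraMap ℝ _ c ≤ M ↔ ∀ i, c ≤ hM.eigenvalues i := by
  rw [algebraMap_le_iff_le_spectrum hM.isSelfAdjoint, hM.spectrum_real_eq_range_eigenvalues]
  simp

lemma star_eigenvectorBasis_dotProduct (hM : M.IsHermitian) (i j : n) :
    star ⇑(hM.eigenvectorBasis i) ⬝ᵥ ⇑(hM.eigenvectorBasis j) = if i = j then 1 else 0 := by
  rw [← orthonormal_iff_ite.mp hM.eigenvectorBasis.orthonormal i j,
    EuclideanSpace.inner_eq_star_dotProduct, dotProduct_comm]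

/-- The plane spanned by two eigenvectors meets every hyperplane `bᴴ x = 0`. -/
lemma exists_ne_zero_dotProduct_eq_zero (hM : M.IsHermitian) {i j : n} (hij : i ≠ j)
    (b : n → 𝕜) {c : ℝ} (hi : hM.eigenvalues i ≤ c) (hj : hM.eigenvalues j ≤ c) :
    ∃ x ≠ 0, star b ⬝ᵥ x = 0 ∧ star x ⬝ᵥ (M *ᵥ x) ≤ c * (star x ⬝ᵥ x) := by
  set v := ⇑(hM.eigenvectorBasis i)
  set w := ⇑(hM.eigenvectorBasis j)
  have hvv : star v ⬝ᵥ v = 1 := by simpa using hM.star_eigenvectorBasis_dotProduct i i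
  have hww : star w ⬝ᵥ w = 1 := by simpa using hM.star_eigenvectorBasis_dotProduct j j
  have hvw : star v ⬝ᵥ w = 0 := by simpa [hij] using hM.star_eigenvectorBasis_dotProduct i j
  obtain ⟨α, β, hαβ, hb⟩ := exists_ne_zero_mul_add_mul_eq_zero (star b ⬝ᵥ v) (star b ⬝ᵥ w)
  have hxx : star (α • v + β • w) ⬝ᵥ (α • v + β • w) = ((‖α‖ ^ 2 + ‖β‖ ^ 2 : ℝ) : 𝕜) := by
    rw [star_smul_add_smul_dotProduct_smul_add_smul hvv hww hvw]
    simp only [RCLike.star_def, RCLike.conj_mul]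
    push_cast
    ring
  have hMx : M *ᵥ (α • v + β • w) = (hM.eigenvalues i * α) • v + (hM.eigenvalues j * β) • w := by
    rw [mulVec_add, mulVec_smul, mulVec_smul, hM.mulVec_eigenvectorBasis,
      hM.mulVec_eigenvectorBasis, RCLike.real_smul_eq_coe_smul (K := 𝕜),
      RCLike.real_smul_eq_coe_smul (K := 𝕜), smul_smul, smul_smul, mul_comm α, mul_comm β]
  have hxMx : star (α • v + β • w) ⬝ᵥ (M *ᵥ (α • v + β • w)) =
      ((hM.eigenvalues i * ‖α‖ ^ 2 + hM.eigenvalues j * ‖β‖ ^ 2 : ℝ) : 𝕜) := by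
    rw [hMx, star_smul_add_smul_dotProduct_smul_add_smul hvv hww hvw]
    simp only [RCLike.star_def]
    rw [mul_left_comm, RCLike.conj_mul, mul_left_comm, RCLike.conj_mul]
    push_cast
    ring
  have hpos : 0 < ‖α‖ ^ 2 + ‖β‖ ^ 2 := by
    rcases hαβ with h | h <;> have := norm_pos_iff.mpr h <;> positivity
  refine ⟨α • v + β • w, fun hx => ?_, ?_, ?_⟩
  · rw [hx, star_zero, zero_dotProduct, eq_comm, RCLike.ofReal_eq_zero] at hxx
    exact hpos.ne' hxx
  · simpa only [dotProduct_add, dotProduct_smul, smul_eq_mul] using hb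
  · rw [hxMx, hxx, ← RCLike.ofReal_mul, RCLike.ofReal_le_ofReal]
    nlinarith [sq_nonneg ‖α‖, sq_nonneg ‖β‖]

end IsHermitian

end Matrix

namespace IsDescEigListing

variable {N : ℕ} {M M' : Matrix (Fin N) (Fin N) ℂ} {hM : M.IsHermitian} {hM' : M'.IsHermitian}
  {l l' : Fin N → ℝ}

lemma eigenvalues_le_head (hl : IsDescEigListing hM l) (h : 0 < N) (i : Fin N) :
    hM.eigenvalues i ≤ l ⟨0, h⟩ := by
  obtain ⟨hanti, e, he⟩ := hl
  rw [← e.apply_symm_apply i, ← he]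
  exact hanti (Fin.mk_le_of_le_val (Nat.zero_le _))

lemma last_le_eigenvalues (hl : IsDescEigListing hM l) (h : 0 < N) (i : Fin N) :
    l ⟨N - 1, by omega⟩ ≤ hM.eigenvalues i := by
  obtain ⟨hanti, e, he⟩ := hl
  rw [← e.apply_symm_apply i, ← he]
  exact hanti (Fin.le_def.mpr (Nat.le_sub_one_of_lt (e.symm i).isLt))

lemma le_algebraMap_head (hl : IsDescEigListing hM l) (h : 0 < N) :
    M ≤ algebraMap ℝ _ (l ⟨0, h⟩) :=
  hM.le_algebraMap_iff.mpr (hl.eigenvalues_le_head h)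

lemma algebraMap_last_le (hl : IsDescEigListing hM l) (h : 0 < N) :
    algebraMap ℝ _ (l ⟨N - 1, by omega⟩) ≤ M :=
  hM.algebraMap_le_iff.mpr (hl.last_le_eigenvalues h)

lemma head_le_of_le_algebraMap (hl : IsDescEigListing hM l) (h : 0 < N) {c : ℝ}
    (hc : M ≤ algebraMap ℝ _ c) : l ⟨0, h⟩ ≤ c := by
  obtain ⟨-, e, he⟩ := hl
  exact he _ ▸ hM.le_algebraMap_iff.mp hc _

lemma le_last_of_algebraMap_le (hl : IsDescEigListing hM l) (h : 0 < N) {c : ℝ}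
    (hc : algebraMap ℝ _ c ≤ M) : c ≤ l ⟨N - 1, by omega⟩ := by
  obtain ⟨-, e, he⟩ := hl
  exact he _ ▸ hM.algebraMap_le_iff.mp hc _

lemma head_mono (hl : IsDescEigListing hM l) (hl' : IsDescEigListing hM' l') (hMM' : M ≤ M')
    (h : 0 < N) : l ⟨0, h⟩ ≤ l' ⟨0, h⟩ :=
  hl.head_le_of_le_algebraMap h (hMM'.trans (hl'.le_algebraMap_head h))

lemma last_mono (hl : IsDescEigListing hM l) (hl' : IsDescEigListing hM' l') (hMM' : M ≤ M')
    (h : 0 < N) : l ⟨N - 1, by omega⟩ ≤ l' ⟨N - 1, by omega⟩ :=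
  hl'.le_last_of_algebraMap_le h ((hl.algebraMap_last_le h).trans hMM')

lemma last_le_of_star_dotProduct_mulVec_le (hl : IsDescEigListing hM l) (h : 0 < N)
    {x : Fin N → ℂ} (hx : x ≠ 0) {c : ℝ} (hc : star x ⬝ᵥ (M *ᵥ x) ≤ c * (star x ⬝ᵥ x)) :
    l ⟨N - 1, by omega⟩ ≤ c := by
  have hlast := star_dotProduct_mulVec_le_of_le (hl.algebraMap_last_le h) x
  rw [star_dotProduct_algebraMap_mulVec] at hlast
  exact Complex.real_le_real.mp
    (le_of_mul_le_mul_right (hlast.trans hc) (dotProduct_star_self_pos_iff.mpr hx))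

lemma last_le_of_mulVec_eq_of_dotProduct_eq_zero (hl : IsDescEigListing hM l)
    (hl' : IsDescEigListing hM' l') (hN : 1 < N) (b : Fin N → ℂ)
    (hMM' : ∀ x, star b ⬝ᵥ x = 0 → M' *ᵥ x = M *ᵥ x) :
    l' ⟨N - 1, by omega⟩ ≤ l ⟨N - 2, by omega⟩ := by
  obtain ⟨hanti, e, he⟩ := hl
  have hne : (⟨N - 2, by omega⟩ : Fin N) ≠ ⟨N - 1, by omega⟩ :=
    Fin.ne_of_val_ne (show N - 2 ≠ N - 1 by omega)
  have hle : hM.eigenvalues (e ⟨N - 1, by omega⟩) ≤ l ⟨N - 2, by omega⟩ :=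
    he ⟨N - 1, by omega⟩ ▸ hanti (Fin.mk_le_mk.mpr (by omega))
  obtain ⟨x, hx0, hbx, hx⟩ :=
    hM.exists_ne_zero_dotProduct_eq_zero (e.injective.ne hne) b (he _).ge hle
  exact hl'.last_le_of_star_dotProduct_mulVec_le (by omega) hx0 (hMM' x hbx ▸ hx)

lemma hermCond_eq (hl : IsDescEigListing hM l) (hMpos : M.PosDef) (h : 0 < N) :
    hermCond hM = l ⟨0, h⟩ / l ⟨N - 1, by omega⟩ := by
  have : Nonempty (Fin N) := ⟨⟨0, h⟩⟩
  have habs (i : Fin N) : |hM.eigenvalues i| = hM.eigenvalues i :=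
    abs_of_pos (hMpos.eigenvalues_pos i)
  obtain ⟨e, he⟩ := hl.2
  simp only [hermCond, habs]
  congr 1
  · refine le_antisymm (ciSup_le (hl.eigenvalues_le_head h)) ?_
    exact he _ ▸ le_ciSup (Set.finite_range _).bddAbove _
  · refine le_antisymm ?_ (le_ciInf (hl.last_le_eigenvalues h))
    exact he _ ▸ ciInf_le (Set.finite_range _).bddBelow _

end IsDescEigListing

/-- For `ξ < 0`, `Θ = A - ξ b bᴴ` is positive definite and its condition number
`κ(Θ) = θ₀ / θ_{N-1}` satisfies `λ₀/λ_{N-2} ≤ κ(Θ) ≤ (λ₀ - ξ)/λ_{N-1}`. -/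
theorem sr1r_cond_bounds_neg_xi {N : ℕ} (hN : 2 ≤ N)
    (A : Matrix (Fin N) (Fin N) ℂ) (hA : A.PosDef)
    (lam : Fin N → ℝ) (hlam : IsDescEigListing hA.isHermitian lam)
    (hlampos : ∀ i, 0 < lam i)
    (b : Fin N → ℂ) (hb : star b ⬝ᵥ b = 1)
    (ξ : ℝ) (hξ : ξ < 0)
    (Θ : Matrix (Fin N) (Fin N) ℂ)
    (hΘdef : Θ = A - (ξ : ℂ) • vecMulVec b (star b))
    (hΘ : Θ.IsHermitian)
    (θ : Fin N → ℝ) (hθ : IsDescEigListing hΘ θ) :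
    Θ.PosDef ∧
    hermCond hΘ = θ ⟨0, by omega⟩ / θ ⟨N - 1, by omega⟩ ∧
    lam ⟨0, by omega⟩ / lam ⟨N - 2, by omega⟩ ≤ θ ⟨0, by omega⟩ / θ ⟨N - 1, by omega⟩ ∧
    θ ⟨0, by omega⟩ / θ ⟨N - 1, by omega⟩ ≤ (lam ⟨0, by omega⟩ - ξ) / lam ⟨N - 1, by omega⟩ := by
  have hN0 : 0 < N := by omega
  have hΘeq : Θ = A + ((-ξ : ℝ) : ℂ) • vecMulVec b (star b) := by
    rw [hΘdef, Complex.ofReal_neg, neg_smul, sub_eq_add_neg]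
  have hAΘ : A ≤ Θ := hΘeq ▸ le_add_smul_vecMulVec_self_star A (neg_nonneg.mpr hξ.le) b
  have hΘA : Θ ≤ A + algebraMap ℝ _ (-ξ) :=
    hΘeq ▸ add_smul_vecMulVec_self_star_le A (neg_nonneg.mpr hξ.le) hb
  have hΘpd : Θ.PosDef := add_sub_cancel A Θ ▸ hA.add_posSemidef (le_iff.mp hAΘ)
  have hΘ_eq_A : ∀ x, star b ⬝ᵥ x = 0 → Θ *ᵥ x = A *ᵥ x := fun x hbx => by
    simp [hΘdef, sub_mulVec, smul_mulVec, vecMulVec_mulVec, hbx]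
  have hθ_last := hlam.last_le_of_mulVec_eq_of_dotProduct_eq_zero hθ hN b hΘ_eq_A
  have hθ_head : θ ⟨0, by omega⟩ ≤ lam ⟨0, by omega⟩ - ξ := by
    refine hθ.head_le_of_le_algebraMap hN0 (hΘA.trans ?_)
    rw [sub_eq_add_neg, map_add]
    exact add_le_add_left (hlam.le_algebraMap_head hN0) _
  have hlam_head := hlam.head_mono hθ hAΘ hN0
  have hlam_last := hlam.last_mono hθ hAΘ hN0
  refine ⟨hΘpd, hθ.hermCond_eq hΘpd hN0, ?_, ?_⟩
  · exact div_le_div₀ ((hlampos _).le.trans hlam_head) hlam_head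
      ((hlampos _).trans_le hlam_last) hθ_last
  · exact div_le_div₀ (by linarith [hlampos ⟨0, by omega⟩]) hθ_head (hlampos _) hlam_last
end
end

section
/- (Theorem 1.) Let N ≥ 4, let A ∈ ℂ^{N×N} be Hermitian positive definite with eigenvalues λ_0 ≥ λ_1 ≥ ⋯ ≥ λ_{N−1} > 0 (descending, with multiplicity) satisfying λ_1 > λ_{N−2}, and let b ∈ ℂ^N be a unit vector. Then there exists ξ > 0 such that the eigenvalues θ_0 ≥ θ_1 ≥ ⋯ ≥ θ_{N−1} of Θ = A − ξ b bᴴ satisfy −θ_0 < θ_{N−1} < −θ_{N−2}. -/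
/-!
Let `f ξ` be the smallest eigenvalue of `Θ = A - ξ b bᴴ`. Rayleigh quotients of `A - ξ b bᴴ` and
`A - ξ' b bᴴ` differ by at most `|ξ - ξ'|`, so `f` is 1-Lipschitz; moreover `f 0 = λ_{N-1} > 0` and
`f ξ ≤ bᴴ A b - ξ`. By the intermediate value theorem some `ξ > 0` gives
`θ_{N-1} = f ξ = -(λ_1 + λ_{N-2}) / 2`, which lies strictly between `-λ_1` and `-λ_{N-2}` because
`λ_1 > λ_{N-2}`. It remains to use the rank-one interlacing inequalities `λ_1 ≤ θ_0` and
`θ_{N-2} ≤ λ_{N-2}`. Each is a two-dimensional Courant–Fischer argument: the span of two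
eigenvectors of `A` contains a nonzero vector orthogonal to `b` (on which `Θ` and `A` agree),
respectively orthogonal to the bottom eigenvector of `Θ` (on which `Θ ≥ θ_{N-2}`).
-/

open Matrix
open scoped ComplexOrder

noncomputable section

variable {𝕜 : Type*} [RCLike 𝕜] {n : Type*}

lemma Matrix.IsHermitian.sub_smul_vecMulVec_star {M : Matrix n n 𝕜} (hM : M.IsHermitian) (t : ℝ)
    (b : n → 𝕜) : (M - (t : 𝕜) • vecMulVec b (star b)).IsHermitian := by
  refine hM.sub (IsHermitian.smul ?_ (RCLike.conj_ofReal t))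
  rw [IsHermitian, conjTranspose_vecMulVec, star_star]

variable [Fintype n]

lemma re_star_dotProduct_self_eq_norm_sq (x : n → 𝕜) :
    RCLike.re (star x ⬝ᵥ x) = ‖WithLp.toLp 2 x‖ ^ 2 := by
  rw [dotProduct_comm, ← EuclideanSpace.inner_toLp_toLp, inner_self_eq_norm_sq]

lemma norm_star_dotProduct_sq_le (b x : n → 𝕜) :
    ‖star b ⬝ᵥ x‖ ^ 2 ≤ RCLike.re (star b ⬝ᵥ b) * RCLike.re (star x ⬝ᵥ x) := by
  rw [re_star_dotProduct_self_eq_norm_sq, re_star_dotProduct_self_eq_norm_sq, ← mul_pow,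
    dotProduct_comm, ← EuclideanSpace.inner_toLp_toLp]
  gcongr
  exact norm_inner_le_norm _ _

lemma re_star_dotProduct_sub_smul_vecMulVec_mulVec (M : Matrix n n 𝕜) (t : ℝ) (b x : n → 𝕜) :
    RCLike.re (star x ⬝ᵥ ((M - (t : 𝕜) • vecMulVec b (star b)) *ᵥ x))
      = RCLike.re (star x ⬝ᵥ (M *ᵥ x)) - t * ‖star b ⬝ᵥ x‖ ^ 2 := by
  have hconj : star x ⬝ᵥ b = star (star b ⬝ᵥ x) := by rw [← star_dotProduct_star, star_star]
  have h : star x ⬝ᵥ (vecMulVec b (star b) *ᵥ x) = ((‖star b ⬝ᵥ x‖ ^ 2 : ℝ) : 𝕜) := by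
    simp [vecMulVec_mulVec, hconj, RCLike.star_def, RCLike.mul_conj]
  rw [sub_mulVec, dotProduct_sub, smul_mulVec, dotProduct_smul, h, map_sub, smul_eq_mul,
    ← RCLike.ofReal_mul, RCLike.ofReal_re]

namespace OrthonormalBasis

variable (u : OrthonormalBasis n 𝕜 (EuclideanSpace 𝕜 n))

lemma star_apply_dotProduct_apply [DecidableEq n] (i j : n) :
    star ⇑(u i) ⬝ᵥ ⇑(u j) = if i = j then 1 else 0 := by
  rw [dotProduct_comm, ← EuclideanSpace.inner_eq_star_dotProduct, u.inner_eq_ite]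

lemma re_star_dotProduct_self_eq_sum (x : n → 𝕜) :
    RCLike.re (star x ⬝ᵥ x) = ∑ i, ‖star ⇑(u i) ⬝ᵥ x‖ ^ 2 := by
  rw [re_star_dotProduct_self_eq_norm_sq, ← u.sum_sq_norm_inner_right]
  simp [EuclideanSpace.inner_eq_star_dotProduct, dotProduct_comm]

lemma exists_orthogonal_mem_span_pair [DecidableEq n] {i j : n} (hij : i ≠ j) (y : n → 𝕜) :
    ∃ x : n → 𝕜, 0 < RCLike.re (star x ⬝ᵥ x) ∧ star y ⬝ᵥ x = 0 ∧
      ∀ k, star ⇑(u k) ⬝ᵥ x ≠ 0 → k = i ∨ k = j := by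
  by_cases hi : star y ⬝ᵥ ⇑(u i) = 0
  · refine ⟨u i, ?_, hi, fun k => ?_⟩
    · simp [u.star_apply_dotProduct_apply]
    · simp_all [u.star_apply_dotProduct_apply]
  set x := (star y ⬝ᵥ ⇑(u j)) • ⇑(u i) - (star y ⬝ᵥ ⇑(u i)) • ⇑(u j)
  have hcoord : ∀ k, star ⇑(u k) ⬝ᵥ x
      = (if k = i then star y ⬝ᵥ ⇑(u j) else 0) - if k = j then star y ⬝ᵥ ⇑(u i) else 0 := by
    intro k
    simp only [x, dotProduct_sub, dotProduct_smul, u.star_apply_dotProduct_apply, smul_eq_mul,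
      mul_ite, mul_one, mul_zero]
  refine ⟨x, ?_, ?_, fun k => ?_⟩
  · rw [u.re_star_dotProduct_self_eq_sum]
    refine lt_of_lt_of_le ?_ (Finset.single_le_sum (fun k _ => by positivity) (Finset.mem_univ j))
    simpa [hcoord, Ne.symm hij] using pow_pos (norm_pos_iff.2 hi) 2
  · simp only [x, dotProduct_sub, dotProduct_smul, smul_eq_mul]
    ring
  · contrapose!
    rintro ⟨hki, hkj⟩
    simp [hcoord, hki, hkj]

end OrthonormalBasis

namespace Matrix.IsHermitian

variable [DecidableEq n] {M : Matrix n n 𝕜}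

lemma star_eigenvectorBasis_dotProduct_mulVec (hM : M.IsHermitian) (i : n) (x : n → 𝕜) :
    star ⇑(hM.eigenvectorBasis i) ⬝ᵥ (M *ᵥ x)
      = hM.eigenvalues i * (star ⇑(hM.eigenvectorBasis i) ⬝ᵥ x) := by
  have h : star ⇑(hM.eigenvectorBasis i) ᵥ* M = star (M *ᵥ ⇑(hM.eigenvectorBasis i)) := by
    rw [star_mulVec, hM.eq]
  rw [dotProduct_mulVec, h, mulVec_eigenvectorBasis, star_smul, smul_dotProduct, star_trivial,
    RCLike.real_smul_eq_coe_mul]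

lemma star_dotProduct_mulVec_eq_sum (hM : M.IsHermitian) (x : n → 𝕜) :
    star x ⬝ᵥ (M *ᵥ x)
      = ∑ i, (hM.eigenvalues i : 𝕜) * ‖star ⇑(hM.eigenvectorBasis i) ⬝ᵥ x‖ ^ 2 := by
  rw [dotProduct_comm, ← EuclideanSpace.inner_toLp_toLp,
    ← hM.eigenvectorBasis.sum_inner_mul_inner]
  refine Finset.sum_congr rfl fun i _ => ?_
  rw [← inner_conj_symm, EuclideanSpace.inner_toLp_toLp, EuclideanSpace.inner_eq_star_dotProduct,
    dotProduct_comm, dotProduct_comm (M *ᵥ x), star_eigenvectorBasis_dotProduct_mulVec,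
    ← mul_assoc, mul_comm _ (hM.eigenvalues i : 𝕜), mul_assoc, RCLike.conj_mul]

lemma re_star_dotProduct_mulVec_eq_sum (hM : M.IsHermitian) (x : n → 𝕜) :
    RCLike.re (star x ⬝ᵥ (M *ᵥ x))
      = ∑ i, hM.eigenvalues i * ‖star ⇑(hM.eigenvectorBasis i) ⬝ᵥ x‖ ^ 2 := by
  rw [hM.star_dotProduct_mulVec_eq_sum, map_sum]
  norm_cast

lemma mul_re_star_dotProduct_self_le (hM : M.IsHermitian) {c : ℝ} {x : n → 𝕜}
    (h : ∀ i, c ≤ hM.eigenvalues i ∨ star ⇑(hM.eigenvectorBasis i) ⬝ᵥ x = 0) :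
    c * RCLike.re (star x ⬝ᵥ x) ≤ RCLike.re (star x ⬝ᵥ (M *ᵥ x)) := by
  rw [hM.eigenvectorBasis.re_star_dotProduct_self_eq_sum, hM.re_star_dotProduct_mulVec_eq_sum,
    Finset.mul_sum]
  refine Finset.sum_le_sum fun i _ => ?_
  rcases h i with h | h
  · gcongr
  · simp [h]

lemma re_star_dotProduct_mulVec_le (hM : M.IsHermitian) {C : ℝ} {x : n → 𝕜}
    (h : ∀ i, hM.eigenvalues i ≤ C ∨ star ⇑(hM.eigenvectorBasis i) ⬝ᵥ x = 0) :
    RCLike.re (star x ⬝ᵥ (M *ᵥ x)) ≤ C * RCLike.re (star x ⬝ᵥ x) := by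
  rw [hM.eigenvectorBasis.re_star_dotProduct_self_eq_sum, hM.re_star_dotProduct_mulVec_eq_sum,
    Finset.mul_sum]
  refine Finset.sum_le_sum fun i _ => ?_
  rcases h i with h | h
  · gcongr
  · simp [h]

-- For empty `n` this is the junk value `sInf ∅ = 0`.
def minEigenvalue (hM : M.IsHermitian) : ℝ := ⨅ i, hM.eigenvalues i

lemma minEigenvalue_le_eigenvalues (hM : M.IsHermitian) (i : n) :
    hM.minEigenvalue ≤ hM.eigenvalues i :=
  Finite.ciInf_le _ i

lemma exists_eigenvalues_eq_minEigenvalue [Nonempty n] (hM : M.IsHermitian) :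
    ∃ i, hM.eigenvalues i = hM.minEigenvalue :=
  exists_eq_ciInf_of_finite

lemma minEigenvalue_mul_le (hM : M.IsHermitian) (x : n → 𝕜) :
    hM.minEigenvalue * RCLike.re (star x ⬝ᵥ x) ≤ RCLike.re (star x ⬝ᵥ (M *ᵥ x)) :=
  hM.mul_re_star_dotProduct_self_le fun i => Or.inl (hM.minEigenvalue_le_eigenvalues i)

lemma minEigenvalue_le_minEigenvalue_add [Nonempty n] {M' : Matrix n n 𝕜} (hM : M.IsHermitian)
    (hM' : M'.IsHermitian) {c : ℝ}
    (h : ∀ x, RCLike.re (star x ⬝ᵥ (M *ᵥ x))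
      ≤ RCLike.re (star x ⬝ᵥ (M' *ᵥ x)) + c * RCLike.re (star x ⬝ᵥ x)) :
    hM.minEigenvalue ≤ hM'.minEigenvalue + c := by
  obtain ⟨i, hi⟩ := hM'.exists_eigenvalues_eq_minEigenvalue
  have hu : RCLike.re (star ⇑(hM'.eigenvectorBasis i) ⬝ᵥ ⇑(hM'.eigenvectorBasis i)) = 1 := by
    simp [hM'.eigenvectorBasis.star_apply_dotProduct_apply]
  have hlow := hM.minEigenvalue_mul_le (hM'.eigenvectorBasis i)
  have hup := h (hM'.eigenvectorBasis i)
  rw [hu, ← hM'.eigenvalues_eq, hi] at hup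
  rw [hu] at hlow
  linarith

lemma lipschitzWith_minEigenvalue_sub_smul_vecMulVec_star [Nonempty n] (hM : M.IsHermitian)
    {b : n → 𝕜} (hb : star b ⬝ᵥ b = 1) :
    LipschitzWith 1 fun t : ℝ => (hM.sub_smul_vecMulVec_star t b).minEigenvalue := by
  refine LipschitzWith.of_le_add fun s t => minEigenvalue_le_minEigenvalue_add _ _ fun x => ?_
  rw [re_star_dotProduct_sub_smul_vecMulVec_mulVec, re_star_dotProduct_sub_smul_vecMulVec_mulVec,
    Real.dist_eq]
  have hcs := norm_star_dotProduct_sq_le b x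
  rw [hb, RCLike.one_re, one_mul] at hcs
  nlinarith [le_abs_self (s - t), neg_abs_le (s - t), sq_nonneg ‖star b ⬝ᵥ x‖]

lemma exists_pos_minEigenvalue_sub_smul_vecMulVec_star_eq [Nonempty n] (hM : M.IsHermitian)
    {b : n → 𝕜} (hb : star b ⬝ᵥ b = 1) {m : ℝ} (hm : m < hM.minEigenvalue) :
    ∃ ξ : ℝ, 0 < ξ ∧ (hM.sub_smul_vecMulVec_star ξ b).minEigenvalue = m := by
  have hΘ := hM.sub_smul_vecMulVec_star (b := b)
  have hb' : RCLike.re (star b ⬝ᵥ b) = 1 := by rw [hb, RCLike.one_re]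
  have hmb := hM.minEigenvalue_mul_le b
  rw [hb', mul_one] at hmb
  have hf0 : m < (hΘ 0).minEigenvalue := by
    have := hM.minEigenvalue_le_minEigenvalue_add (hΘ 0) (c := 0) fun x => by simp
    linarith
  have hfT : (hΘ (RCLike.re (star b ⬝ᵥ (M *ᵥ b)) - m)).minEigenvalue ≤ m := by
    have := (hΘ (RCLike.re (star b ⬝ᵥ (M *ᵥ b)) - m)).minEigenvalue_mul_le b
    rw [re_star_dotProduct_sub_smul_vecMulVec_mulVec, hb, RCLike.one_re, norm_one] at this
    linarith
  obtain ⟨ξ, hξ, hfξ⟩ := intermediate_value_Icc' (by linarith)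
    (hM.lipschitzWith_minEigenvalue_sub_smul_vecMulVec_star hb).continuous.continuousOn
    ⟨hfT, hf0.le⟩
  exact ⟨ξ, lt_of_le_of_ne hξ.1 (by rintro rfl; exact hf0.ne' hfξ), hfξ⟩

end Matrix.IsHermitian

namespace IsDescEigListing

variable {N : ℕ} {M M' : Matrix (Fin N) (Fin N) ℂ} {hM : M.IsHermitian} {hM' : M'.IsHermitian}
  {l l' : Fin N → ℝ}

lemma re_star_dotProduct_mulVec_le_apply_zero (hl : IsDescEigListing hM l) (hN : 0 < N)
    (x : Fin N → ℂ) : RCLike.re (star x ⬝ᵥ (M *ᵥ x)) ≤ l ⟨0, hN⟩ * RCLike.re (star x ⬝ᵥ x) := by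
  obtain ⟨hanti, e, he⟩ := hl
  refine hM.re_star_dotProduct_mulVec_le fun i => Or.inl ?_
  rw [← e.apply_symm_apply i, ← he]
  exact hanti (Fin.le_iff_val_le_val.2 (Nat.zero_le _))

lemma apply_last_eq_minEigenvalue (hl : IsDescEigListing hM l) (hN : 0 < N) :
    l ⟨N - 1, by omega⟩ = hM.minEigenvalue := by
  have : Nonempty (Fin N) := ⟨⟨0, hN⟩⟩
  obtain ⟨hanti, e, he⟩ := hl
  obtain ⟨i, hi⟩ := hM.exists_eigenvalues_eq_minEigenvalue
  refine le_antisymm ?_ (he _ ▸ hM.minEigenvalue_le_eigenvalues _)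
  rw [← hi, ← e.apply_symm_apply i, ← he]
  exact hanti (Fin.le_iff_val_le_val.2 (by dsimp only; omega))

lemma exists_orthogonal_re_star_dotProduct_mulVec_mem_Icc (hl : IsDescEigListing hM l)
    {a b : Fin N} (hab : a < b) (y : Fin N → ℂ) :
    ∃ x : Fin N → ℂ, 0 < RCLike.re (star x ⬝ᵥ x) ∧ star y ⬝ᵥ x = 0 ∧
      RCLike.re (star x ⬝ᵥ (M *ᵥ x)) ∈
        Set.Icc (l b * RCLike.re (star x ⬝ᵥ x)) (l a * RCLike.re (star x ⬝ᵥ x)) := by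
  obtain ⟨hanti, e, he⟩ := hl
  obtain ⟨x, hxpos, hyx, hx⟩ :=
    hM.eigenvectorBasis.exists_orthogonal_mem_span_pair (e.injective.ne hab.ne) y
  have hbounds : ∀ k, k = e a ∨ k = e b → l b ≤ hM.eigenvalues k ∧ hM.eigenvalues k ≤ l a := by
    rintro k (rfl | rfl) <;> rw [← he]
    exacts [⟨hanti hab.le, le_rfl⟩, ⟨le_rfl, hanti hab.le⟩]
  exact ⟨x, hxpos, hyx,
    hM.mul_re_star_dotProduct_self_le fun k =>
      or_iff_not_imp_right.2 fun h => (hbounds k (hx k h)).1,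
    hM.re_star_dotProduct_mulVec_le fun k =>
      or_iff_not_imp_right.2 fun h => (hbounds k (hx k h)).2⟩

lemma exists_forall_orthogonal_apply_sub_two_mul_le (hl : IsDescEigListing hM l) (hN : 2 ≤ N) :
    ∃ w : Fin N → ℂ, ∀ x, star w ⬝ᵥ x = 0 →
      l ⟨N - 2, by omega⟩ * RCLike.re (star x ⬝ᵥ x) ≤ RCLike.re (star x ⬝ᵥ (M *ᵥ x)) := by
  obtain ⟨hanti, e, he⟩ := hl
  refine ⟨hM.eigenvectorBasis (e ⟨N - 1, by omega⟩), fun x hx =>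
    hM.mul_re_star_dotProduct_self_le fun k => or_iff_not_imp_right.2 fun hk => ?_⟩
  have hne : (e.symm k).val ≠ N - 1 := fun h =>
    hk (by rw [← e.apply_symm_apply k, show e.symm k = ⟨N - 1, by omega⟩ from Fin.ext h]; exact hx)
  rw [← e.apply_symm_apply k, ← he]
  exact hanti (Fin.le_iff_val_le_val.2 (by have := (e.symm k).isLt; dsimp only; omega))

lemma apply_one_le_apply_zero (hl : IsDescEigListing hM l) (hl' : IsDescEigListing hM' l')
    (hN : 2 ≤ N) (y : Fin N → ℂ)
    (h : ∀ x, star y ⬝ᵥ x = 0 →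
      RCLike.re (star x ⬝ᵥ (M *ᵥ x)) ≤ RCLike.re (star x ⬝ᵥ (M' *ᵥ x))) :
    l ⟨1, by omega⟩ ≤ l' ⟨0, by omega⟩ := by
  obtain ⟨x, hxpos, hyx, hlow, -⟩ := hl.exists_orthogonal_re_star_dotProduct_mulVec_mem_Icc
    (a := ⟨0, by omega⟩) (b := ⟨1, by omega⟩) (Fin.mk_lt_mk.2 zero_lt_one) y
  exact le_of_mul_le_mul_right
    ((hlow.trans (h x hyx)).trans (hl'.re_star_dotProduct_mulVec_le_apply_zero _ x)) hxpos

lemma apply_sub_two_le (hl : IsDescEigListing hM l) (hl' : IsDescEigListing hM' l')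
    (hN : 2 ≤ N) (h : ∀ x, RCLike.re (star x ⬝ᵥ (M' *ᵥ x)) ≤ RCLike.re (star x ⬝ᵥ (M *ᵥ x))) :
    l' ⟨N - 2, by omega⟩ ≤ l ⟨N - 2, by omega⟩ := by
  obtain ⟨w, hw⟩ := hl'.exists_forall_orthogonal_apply_sub_two_mul_le hN
  obtain ⟨x, hxpos, hwx, -, hup⟩ := hl.exists_orthogonal_re_star_dotProduct_mulVec_mem_Icc
    (a := ⟨N - 2, by omega⟩) (b := ⟨N - 1, by omega⟩) (Fin.mk_lt_mk.2 (by omega)) w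
  exact le_of_mul_le_mul_right (((hw x hwx).trans (h x)).trans hup) hxpos

end IsDescEigListing

/-- Theorem 1: for a Hermitian positive definite `A` with `λ₁ > λ_{N-2}` and any unit
vector `b`, there exists `ξ > 0` such that the descending eigenvalues of
`Θ = A - ξ b bᴴ` satisfy `-θ₀ < θ_{N-1} < -θ_{N-2}`. -/
theorem sr1r_exists_xi_smallest_eig_window {N : ℕ} (hN : 4 ≤ N)
    (A : Matrix (Fin N) (Fin N) ℂ) (hA : A.PosDef)
    (lam : Fin N → ℝ) (hlam : IsDescEigListing hA.isHermitian lam)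
    (hlampos : ∀ i, 0 < lam i)
    (hgap : lam ⟨1, by omega⟩ > lam ⟨N - 2, by omega⟩)
    (b : Fin N → ℂ) (hb : star b ⬝ᵥ b = 1) :
    ∃ ξ : ℝ, 0 < ξ ∧
      ∀ (hΘ : (A - (ξ : ℂ) • vecMulVec b (star b)).IsHermitian)
        (θ : Fin N → ℝ), IsDescEigListing hΘ θ →
          -θ ⟨0, by omega⟩ < θ ⟨N - 1, by omega⟩ ∧
          θ ⟨N - 1, by omega⟩ < -θ ⟨N - 2, by omega⟩ := by
  have : Nonempty (Fin N) := ⟨⟨0, by omega⟩⟩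
  obtain ⟨ξ, hξ, hmin⟩ := hA.isHermitian.exists_pos_minEigenvalue_sub_smul_vecMulVec_star_eq hb
    (m := -(lam ⟨1, by omega⟩ + lam ⟨N - 2, by omega⟩) / 2) (by
      rw [← hlam.apply_last_eq_minEigenvalue (by omega)]
      linarith [hlampos ⟨1, by omega⟩, hlampos ⟨N - 2, by omega⟩, hlampos ⟨N - 1, by omega⟩])
  refine ⟨ξ, hξ, fun hΘ θ hθ => ?_⟩
  have hθlast := (hθ.apply_last_eq_minEigenvalue (by omega)).trans hmin
  -- `exact` rather than `rw`/`linarith` below: the statement's `(ξ : ℂ)` is `Complex.ofReal ξ`,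
  -- which matches the `RCLike` coercion of the general lemmas only up to unfolding.
  have hθ0 : lam ⟨1, by omega⟩ ≤ θ ⟨0, by omega⟩ :=
    hlam.apply_one_le_apply_zero hθ (by omega) b fun x hx => by
      have h := re_star_dotProduct_sub_smul_vecMulVec_mulVec A ξ b x
      rw [hx, norm_zero] at h
      exact (h.trans (by ring)).ge
  have hθ2 : θ ⟨N - 2, by omega⟩ ≤ lam ⟨N - 2, by omega⟩ :=
    hlam.apply_sub_two_le hθ (by omega) fun x => by
      have h := re_star_dotProduct_sub_smul_vecMulVec_mulVec A ξ b x
      exact h.trans_le (sub_le_self _ (mul_nonneg hξ.le (sq_nonneg _)))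
  constructor <;> linarith
end
end

section
/- Let N ≥ 1, let A ∈ ℂ^{N×N} be Hermitian positive definite, let b ∈ ℂ^N be a unit vector, and define the positive real number ξ⊥ = (bᴴ A^{−1} b)^{−1}. Then for every real ξ > ξ⊥, the smallest eigenvalue of the Hermitian matrix A − ξ b bᴴ is strictly negative. -/
open Matrix
open scoped ComplexOrder

/-! With `v = A⁻¹ b` and `c = bᴴ A⁻¹ b > 0`, the quadratic form of `A - ξ b bᴴ` at `v` is
`c - ξ c² = c (1 - ξ c)`, which is negative as soon as `ξ > c⁻¹ = ξ⊥`. So `A - ξ b bᴴ` is not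
positive semidefinite and has a negative eigenvalue. -/

namespace Matrix

variable {n 𝕜 : Type*} [Fintype n] [DecidableEq n] [RCLike 𝕜]

theorem IsHermitian.iInf_eigenvalues_neg_of_not_posSemidef {M : Matrix n n 𝕜}
    (hM : M.IsHermitian) (h : ¬ M.PosSemidef) : ⨅ i, hM.eigenvalues i < 0 := by
  obtain ⟨i, hi⟩ : ∃ i, hM.eigenvalues i < 0 := by
    simpa [hM.posSemidef_iff_eigenvalues_nonneg, Pi.le_def] using h
  exact (ciInf_le (Set.finite_range _).bddBelow i).trans_lt hi

omit [DecidableEq n] in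
theorem dotProduct_sub_smul_vecMulVec_mulVec {R : Type*} [CommRing R] [StarRing R]
    (A : Matrix n n R) (b v : n → R) (ξ : R) :
    star v ⬝ᵥ ((A - ξ • vecMulVec b (star b)) *ᵥ v) =
      star v ⬝ᵥ (A *ᵥ v) - ξ * (star v ⬝ᵥ b) * (star b ⬝ᵥ v) := by
  rw [sub_mulVec, smul_mulVec, vecMulVec_mulVec, dotProduct_sub, dotProduct_smul,
    op_smul_eq_smul, dotProduct_smul, smul_eq_mul, smul_eq_mul, mul_comm (star b ⬝ᵥ v),
    mul_assoc]

theorem not_posSemidef_sub_smul_vecMulVec {A : Matrix n n 𝕜} (hA : A.PosDef) {b : n → 𝕜}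
    (hb : b ≠ 0) {ξ : ℝ} (hξ : (RCLike.re (star b ⬝ᵥ (A⁻¹ *ᵥ b)))⁻¹ < ξ) :
    ¬ (A - (ξ : 𝕜) • vecMulVec b (star b)).PosSemidef := by
  intro hpsd
  set v := A⁻¹ *ᵥ b
  obtain ⟨c, hc, hcv⟩ := RCLike.pos_iff_exists_ofReal.mp (hA.inv.dotProduct_mulVec_pos hb)
  rw [← hcv, RCLike.ofReal_re] at hξ
  have hAv : A *ᵥ v = b := by
    rw [mulVec_mulVec, mul_nonsing_inv A ((isUnit_iff_isUnit_det A).mp hA.isUnit), one_mulVec]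
  have hvb : star v ⬝ᵥ b = c := by
    rw [star_dotProduct, ← hcv, RCLike.star_def, RCLike.conj_ofReal]
  have hform := hpsd.dotProduct_mulVec_nonneg v
  rw [dotProduct_sub_smul_vecMulVec_mulVec, hAv, hvb, ← hcv] at hform
  have hform' : 0 ≤ c - ξ * c * c := by exact_mod_cast hform
  have hξc : 1 < ξ * c := by simpa using (inv_lt_iff_one_lt_mul₀ hc).mp hξ
  nlinarith

end Matrix

theorem sr1r_smallest_eig_neg_general {N : ℕ}
    (A : Matrix (Fin N) (Fin N) ℂ) (hA : A.PosDef)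
    (b : Fin N → ℂ) (hb : star b ⬝ᵥ b = 1)
    (ξperp : ℝ) (hξperp : ξperp = ((star b ⬝ᵥ (A⁻¹ *ᵥ b)).re)⁻¹)
    (ξ : ℝ) (hξ : ξperp < ξ)
    (hΘ : (A - (ξ : ℂ) • vecMulVec b (star b)).IsHermitian) :
    (⨅ i, hΘ.eigenvalues i) < 0 := by
  have hb0 : b ≠ 0 := by
    rintro rfl
    simp at hb
  subst hξperp
  exact hΘ.iInf_eigenvalues_neg_of_not_posSemidef (not_posSemidef_sub_smul_vecMulVec hA hb0 hξ)

/-- For `ξ > ξ⊥ = (bᴴ A⁻¹ b)⁻¹`, the smallest eigenvalue of the Hermitian matrix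
`A - ξ b bᴴ` is strictly negative. -/
theorem sr1r_smallest_eig_neg {N : ℕ} (hN : 1 ≤ N)
    (A : Matrix (Fin N) (Fin N) ℂ) (hA : A.PosDef)
    (b : Fin N → ℂ) (hb : star b ⬝ᵥ b = 1)
    (ξperp : ℝ) (hξperp : ξperp = ((star b ⬝ᵥ (A⁻¹ *ᵥ b)).re)⁻¹)
    (ξ : ℝ) (hξ : ξperp < ξ)
    (hΘ : (A - (ξ : ℂ) • vecMulVec b (star b)).IsHermitian) :
    (⨅ i, hΘ.eigenvalues i) < 0 :=
  sr1r_smallest_eig_neg_general A hA b hb ξperp hξperp ξ hξ hΘ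
end

section
/- Let N ≥ 1, let A ∈ ℂ^{N×N} be Hermitian positive definite, let b ∈ ℂ^N be a unit vector, and set ξ⊥ = (bᴴ A^{−1} b)^{−1}. Denote by λ_min(M) the smallest eigenvalue of a Hermitian matrix M. Then for all real ξ_2 > ξ_1 > ξ⊥, one has λ_min(A − ξ_2 b bᴴ) < λ_min(A − ξ_1 b bᴴ) < 0; that is, the smallest eigenvalue of A − ξ b bᴴ is strictly decreasing in ξ on (ξ⊥, ∞) and is negative there. -/
/-!
Write `Θ ξ = A - ξ b bᴴ` and `r = bᴴ A⁻¹ b > 0`. On `x = A⁻¹ b` the quadratic form of `Θ ξ` equals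
`r (1 - ξ r)`, which is negative exactly when `ξ > ξ⊥ = r⁻¹`; by the Rayleigh bound
`λ_min ‖x‖² ≤ Re xᴴ M x`, this makes `λ_min (Θ ξ₁)` negative. A unit eigenvector `u` for
`λ_min (Θ ξ₁)` then cannot be orthogonal to `b`, for otherwise `uᴴ (Θ ξ₁) u = uᴴ A u > 0`. Hence
`uᴴ (Θ ξ₂) u = λ_min (Θ ξ₁) - (ξ₂ - ξ₁) |bᴴ u|²` is strictly below `λ_min (Θ ξ₁)`, and it bounds
`λ_min (Θ ξ₂)` from above.
-/

open Matrix
open scoped ComplexOrder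

namespace Matrix

variable {n 𝕜 : Type*} [Fintype n] [RCLike 𝕜]

lemma re_dotProduct_sub_smul_vecMulVec_mulVec (M : Matrix n n 𝕜) (b x : n → 𝕜) (ξ : ℝ) :
    RCLike.re (star x ⬝ᵥ ((M - (ξ : 𝕜) • vecMulVec b (star b)) *ᵥ x)) =
      RCLike.re (star x ⬝ᵥ (M *ᵥ x)) - ξ * ‖star b ⬝ᵥ x‖ ^ 2 := by
  rw [sub_mulVec, dotProduct_sub, smul_mulVec, vecMulVec_mulVec, op_smul_eq_smul,
    dotProduct_smul, dotProduct_smul, star_dotProduct x b, smul_eq_mul, smul_eq_mul,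
    RCLike.star_def, RCLike.mul_conj, map_sub, ← RCLike.ofReal_pow, ← RCLike.ofReal_mul,
    RCLike.ofReal_re]

namespace IsHermitian

variable [DecidableEq n] {M : Matrix n n 𝕜}

lemma posSemidef_sub_smul_one_of_le_eigenvalues (hM : M.IsHermitian) {c : ℝ}
    (hc : ∀ i, c ≤ hM.eigenvalues i) : (M - (c : 𝕜) • (1 : Matrix n n 𝕜)).PosSemidef := by
  have hdiag : (diagonal fun i ↦ ((hM.eigenvalues i - c : ℝ) : 𝕜)).PosSemidef := by
    rw [posSemidef_diagonal_iff]
    exact fun i ↦ mod_cast sub_nonneg.mpr (hc i)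
  have hU := mem_unitaryGroup_iff.mp hM.eigenvectorUnitary.2
  convert hdiag.mul_mul_conjTranspose_same (hM.eigenvectorUnitary : Matrix n n 𝕜) using 1
  conv_lhs => rw [hM.spectral_theorem]
  simp only [Unitary.conjStarAlgAut_apply, RCLike.ofReal_sub]
  rw [← diagonal_sub, ← smul_one_eq_diagonal, Matrix.mul_sub, Matrix.sub_mul,
    ← star_eq_conjTranspose, Matrix.mul_smul, Matrix.mul_one, Matrix.smul_mul, hU]
  rfl

lemma iInf_eigenvalues_mul_re_dotProduct_le (hM : M.IsHermitian) (x : n → 𝕜) :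
    (⨅ i, hM.eigenvalues i) * RCLike.re (star x ⬝ᵥ x) ≤ RCLike.re (star x ⬝ᵥ (M *ᵥ x)) := by
  have h := (hM.posSemidef_sub_smul_one_of_le_eigenvalues fun i ↦
    ciInf_le (Set.finite_range hM.eigenvalues).bddBelow i).re_dotProduct_nonneg x
  rwa [sub_mulVec, smul_mulVec, one_mulVec, dotProduct_sub, dotProduct_smul, map_sub,
    smul_eq_mul, RCLike.re_ofReal_mul, sub_nonneg] at h

lemma iInf_eigenvalues_neg_of_re_dotProduct_mulVec_neg (hM : M.IsHermitian) {x : n → 𝕜}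
    (hx : RCLike.re (star x ⬝ᵥ (M *ᵥ x)) < 0) : ⨅ i, hM.eigenvalues i < 0 := by
  by_contra! h
  have hxx : 0 ≤ RCLike.re (star x ⬝ᵥ x) :=
    (RCLike.nonneg_iff.mp (dotProduct_star_self_nonneg x)).1
  linarith [hM.iInf_eigenvalues_mul_re_dotProduct_le x, mul_nonneg h hxx]

lemma exists_re_dotProduct_mulVec_eq_iInf_eigenvalues [Nonempty n] (hM : M.IsHermitian) :
    ∃ u : n → 𝕜, star u ⬝ᵥ u = 1 ∧ RCLike.re (star u ⬝ᵥ (M *ᵥ u)) = ⨅ i, hM.eigenvalues i := by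
  obtain ⟨i, hi⟩ := exists_eq_ciInf_of_finite (f := hM.eigenvalues)
  refine ⟨hM.eigenvectorBasis i, ?_, hi ▸ (hM.eigenvalues_eq i).symm⟩
  rw [dotProduct_comm, ← EuclideanSpace.inner_eq_star_dotProduct, inner_self_eq_norm_sq_to_K,
    hM.eigenvectorBasis.orthonormal.1 i]
  simp

end IsHermitian

lemma PosDef.re_dotProduct_sub_smul_vecMulVec_inv_mulVec [DecidableEq n] {A : Matrix n n 𝕜}
    (hA : A.PosDef) (b : n → 𝕜) (ξ : ℝ) :
    RCLike.re (star (A⁻¹ *ᵥ b) ⬝ᵥ ((A - (ξ : 𝕜) • vecMulVec b (star b)) *ᵥ (A⁻¹ *ᵥ b))) =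
      RCLike.re (star b ⬝ᵥ (A⁻¹ *ᵥ b)) * (1 - ξ * RCLike.re (star b ⬝ᵥ (A⁻¹ *ᵥ b))) := by
  have hAx : A *ᵥ (A⁻¹ *ᵥ b) = b := by
    rw [mulVec_mulVec, mul_nonsing_inv A ((isUnit_iff_isUnit_det A).mp hA.isUnit), one_mulVec]
  have hnorm : ‖star b ⬝ᵥ (A⁻¹ *ᵥ b)‖ = RCLike.re (star b ⬝ᵥ (A⁻¹ *ᵥ b)) := by
    simpa using congrArg RCLike.re
      (RCLike.norm_of_nonneg' (hA.inv.posSemidef.dotProduct_mulVec_nonneg b))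
  rw [re_dotProduct_sub_smul_vecMulVec_mulVec, hAx, star_dotProduct, RCLike.star_def,
    RCLike.conj_re, hnorm]
  ring

end Matrix

theorem sr1r_smallest_eig_strict_decreasing_general {N : ℕ}
    (A : Matrix (Fin N) (Fin N) ℂ) (hA : A.PosDef)
    (b : Fin N → ℂ) (hb : star b ⬝ᵥ b = 1)
    (ξperp : ℝ) (hξperp : ξperp = ((star b ⬝ᵥ (A⁻¹ *ᵥ b)).re)⁻¹)
    (ξ₁ ξ₂ : ℝ) (h₁ : ξperp < ξ₁) (h₁₂ : ξ₁ < ξ₂)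
    (hΘ₁ : (A - (ξ₁ : ℂ) • vecMulVec b (star b)).IsHermitian)
    (hΘ₂ : (A - (ξ₂ : ℂ) • vecMulVec b (star b)).IsHermitian) :
    (⨅ i, hΘ₂.eigenvalues i) < (⨅ i, hΘ₁.eigenvalues i) ∧
    (⨅ i, hΘ₁.eigenvalues i) < 0 := by
  have hb0 : b ≠ 0 := by
    rintro rfl
    simp at hb
  obtain ⟨i, -⟩ := Function.ne_iff.mp hb0
  have : Nonempty (Fin N) := ⟨i⟩
  set r := (star b ⬝ᵥ (A⁻¹ *ᵥ b)).re
  have hr : 0 < r := hA.inv.re_dotProduct_pos hb0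
  have hξ₁r : 1 < ξ₁ * r := by
    rw [hξperp] at h₁
    exact (inv_lt_iff_one_lt_mul₀ hr).mp h₁
  have hneg : ⨅ i, hΘ₁.eigenvalues i < 0 := by
    refine hΘ₁.iInf_eigenvalues_neg_of_re_dotProduct_mulVec_neg
      ((hA.re_dotProduct_sub_smul_vecMulVec_inv_mulVec b ξ₁).trans_lt ?_)
    show r * (1 - ξ₁ * r) < 0
    nlinarith
  refine ⟨?_, hneg⟩
  obtain ⟨u, hu, hu_min⟩ := hΘ₁.exists_re_dotProduct_mulVec_eq_iInf_eigenvalues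
  have hΘ₁u : (star u ⬝ᵥ (A *ᵥ u)).re - ξ₁ * ‖star b ⬝ᵥ u‖ ^ 2 = ⨅ i, hΘ₁.eigenvalues i :=
    (re_dotProduct_sub_smul_vecMulVec_mulVec A b u ξ₁).symm.trans hu_min
  have hAu : 0 < (star u ⬝ᵥ (A *ᵥ u)).re :=
    hA.re_dotProduct_pos fun h ↦ by simp [h] at hu
  have hbu : 0 < ‖star b ⬝ᵥ u‖ ^ 2 := by nlinarith
  calc ⨅ i, hΘ₂.eigenvalues i
      ≤ (star u ⬝ᵥ ((A - (ξ₂ : ℂ) • vecMulVec b (star b)) *ᵥ u)).re := by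
        simpa [hu] using hΘ₂.iInf_eigenvalues_mul_re_dotProduct_le u
    _ = (star u ⬝ᵥ (A *ᵥ u)).re - ξ₂ * ‖star b ⬝ᵥ u‖ ^ 2 :=
        re_dotProduct_sub_smul_vecMulVec_mulVec A b u ξ₂
    _ < ⨅ i, hΘ₁.eigenvalues i := by
        rw [← hΘ₁u]
        gcongr

/-- On `(ξ⊥, ∞)`, with `ξ⊥ = (bᴴ A⁻¹ b)⁻¹`, the smallest eigenvalue of `A - ξ b bᴴ`
is strictly decreasing in `ξ` and negative: for `ξ₂ > ξ₁ > ξ⊥`,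
`λ_min(A - ξ₂ b bᴴ) < λ_min(A - ξ₁ b bᴴ) < 0`. -/
theorem sr1r_smallest_eig_strict_decreasing {N : ℕ} (hN : 1 ≤ N)
    (A : Matrix (Fin N) (Fin N) ℂ) (hA : A.PosDef)
    (b : Fin N → ℂ) (hb : star b ⬝ᵥ b = 1)
    (ξperp : ℝ) (hξperp : ξperp = ((star b ⬝ᵥ (A⁻¹ *ᵥ b)).re)⁻¹)
    (ξ₁ ξ₂ : ℝ) (h₁ : ξperp < ξ₁) (h₁₂ : ξ₁ < ξ₂)
    (hΘ₁ : (A - (ξ₁ : ℂ) • vecMulVec b (star b)).IsHermitian)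
    (hΘ₂ : (A - (ξ₂ : ℂ) • vecMulVec b (star b)).IsHermitian) :
    (⨅ i, hΘ₂.eigenvalues i) < (⨅ i, hΘ₁.eigenvalues i) ∧
    (⨅ i, hΘ₁.eigenvalues i) < 0 :=
  sr1r_smallest_eig_strict_decreasing_general A hA b hb ξperp hξperp ξ₁ ξ₂ h₁ h₁₂ hΘ₁ hΘ₂
end

section
/- Let N ≥ 3, let A ∈ ℂ^{N×N} be Hermitian positive definite with eigenvalues λ_0 ≥ λ_1 ≥ ⋯ ≥ λ_{N−1} > 0 (descending, with multiplicity), let b ∈ ℂ^N be a unit vector, and let ξ > 0. Then the largest singular value of Θ = A − ξ b bᴴ is at least λ_1 and the smallest singular value of Θ is at most λ_{N−2}; in particular, if Θ is invertible, its condition number satisfies κ(Θ) ≥ λ_1/λ_{N−2}. -/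
/-!
Θ agrees with A on the hyperplane b^⊥. For two distinct eigenvectors of A, the plane they span
meets b^⊥ in some x ≠ 0, and for it
`min(|λ_i|, |λ_j|) ‖x‖ ≤ ‖A x‖ = ‖Θ x‖ ≤ max(|λ_i|, |λ_j|) ‖x‖`,
while expanding in an eigenbasis of Θ gives `σ_min(Θ) ‖x‖ ≤ ‖Θ x‖ ≤ σ_max(Θ) ‖x‖`.
The pairs `(λ_0, λ_1)` and `(λ_{N-2}, λ_{N-1})` give the two bounds.
-/

open Matrix
open scoped ComplexOrder

noncomputable section

open WithLp (toLp)
open scoped InnerProductSpace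

namespace OrthonormalBasis

variable {ι 𝕜 E : Type*} [Fintype ι] [RCLike 𝕜]
  [NormedAddCommGroup E] [InnerProductSpace 𝕜 E]
  (B : OrthonormalBasis ι 𝕜 E) {μ : ι → 𝕜} {T : E →ₗ[𝕜] E}

theorem norm_sq_eq_sum_norm_sq_repr (x : E) : ‖x‖ ^ 2 = ∑ i, ‖B.repr x i‖ ^ 2 := by
  simp_rw [B.repr_apply_apply]
  exact (B.sum_sq_norm_inner_right x).symm

theorem repr_apply_of_eigenbasis (hT : ∀ i, T (B i) = μ i • B i) (x : E) (i : ι) :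
    B.repr (T x) i = μ i * B.repr x i := by
  classical
  conv_lhs => rw [← B.sum_repr x]
  simp [hT, Pi.single_apply, mul_comm]

theorem norm_sq_apply_of_eigenbasis (hT : ∀ i, T (B i) = μ i • B i) (x : E) :
    ‖T x‖ ^ 2 = ∑ i, ‖μ i‖ ^ 2 * ‖B.repr x i‖ ^ 2 := by
  simp_rw [B.norm_sq_eq_sum_norm_sq_repr (T x), B.repr_apply_of_eigenbasis hT, norm_mul, mul_pow]

theorem mul_norm_le_norm_apply_of_eigenbasis (hT : ∀ i, T (B i) = μ i • B i) {x : E} {r : ℝ}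
    (hr : 0 ≤ r) (hμ : ∀ i, B.repr x i ≠ 0 → r ≤ ‖μ i‖) : r * ‖x‖ ≤ ‖T x‖ := by
  refine le_of_sq_le_sq ?_ (norm_nonneg _)
  rw [mul_pow, B.norm_sq_eq_sum_norm_sq_repr x, B.norm_sq_apply_of_eigenbasis hT, Finset.mul_sum]
  refine Finset.sum_le_sum fun i _ => ?_
  by_cases hi : B.repr x i = 0
  · simp [hi]
  · gcongr
    exact hμ i hi

theorem norm_apply_le_mul_norm_of_eigenbasis (hT : ∀ i, T (B i) = μ i • B i) {x : E} {s : ℝ}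
    (hs : 0 ≤ s) (hμ : ∀ i, B.repr x i ≠ 0 → ‖μ i‖ ≤ s) : ‖T x‖ ≤ s * ‖x‖ := by
  refine le_of_sq_le_sq ?_ (by positivity)
  rw [mul_pow, B.norm_sq_eq_sum_norm_sq_repr x, B.norm_sq_apply_of_eigenbasis hT, Finset.mul_sum]
  refine Finset.sum_le_sum fun i _ => ?_
  by_cases hi : B.repr x i = 0
  · simp [hi]
  · gcongr
    exact hμ i hi

theorem exists_ne_zero_inner_eq_zero_of_ne (b : E) {i j : ι} (hij : i ≠ j) :
    ∃ x : E, x ≠ 0 ∧ ⟪b, x⟫_𝕜 = 0 ∧ ∀ k, B.repr x k ≠ 0 → k = i ∨ k = j := by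
  classical
  by_cases hi : ⟪b, B i⟫_𝕜 = 0
  · refine ⟨B i, B.orthonormal.ne_zero i, hi, fun k hk => .inl ?_⟩
    by_contra h
    simp [Ne.symm h] at hk
  · refine ⟨⟪b, B j⟫_𝕜 • B i - ⟪b, B i⟫_𝕜 • B j, fun h => hi ?_, ?_, fun k hk => ?_⟩
    · simpa [hij] using congr(B.repr $h j)
    · rw [inner_sub_right, inner_smul_right, inner_smul_right, mul_comm, sub_self]
    · by_contra h
      push Not at h
      simp [Ne.symm h.1, Ne.symm h.2] at hk

variable {κ : Type*} [Fintype κ] {C : OrthonormalBasis κ 𝕜 E} {ν : κ → 𝕜} {S : E →ₗ[𝕜] E}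

theorem min_norm_le_iSup_norm_of_eqOn_orthogonal (hT : ∀ i, T (B i) = μ i • B i)
    (hS : ∀ k, S (C k) = ν k • C k) (b : E) (hST : ∀ x, ⟪b, x⟫_𝕜 = 0 → S x = T x)
    {i j : ι} (hij : i ≠ j) : min ‖μ i‖ ‖μ j‖ ≤ ⨆ k, ‖ν k‖ := by
  obtain ⟨x, hx0, hbx, hsupp⟩ := B.exists_ne_zero_inner_eq_zero_of_ne b hij
  refine le_of_mul_le_mul_right ?_ (norm_pos_iff.2 hx0)
  calc min ‖μ i‖ ‖μ j‖ * ‖x‖ ≤ ‖T x‖ :=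
        B.mul_norm_le_norm_apply_of_eigenbasis hT (by positivity) fun k hk => by
          rcases hsupp k hk with rfl | rfl
          exacts [min_le_left _ _, min_le_right _ _]
    _ = ‖S x‖ := by rw [hST x hbx]
    _ ≤ (⨆ k, ‖ν k‖) * ‖x‖ :=
        C.norm_apply_le_mul_norm_of_eigenbasis hS (Real.iSup_nonneg fun _ => norm_nonneg _)
          fun k _ => le_ciSup (f := fun k => ‖ν k‖) (Finite.bddAbove_range _) k

theorem iInf_norm_le_max_norm_of_eqOn_orthogonal (hT : ∀ i, T (B i) = μ i • B i)
    (hS : ∀ k, S (C k) = ν k • C k) (b : E) (hST : ∀ x, ⟪b, x⟫_𝕜 = 0 → S x = T x)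
    {i j : ι} (hij : i ≠ j) : ⨅ k, ‖ν k‖ ≤ max ‖μ i‖ ‖μ j‖ := by
  obtain ⟨x, hx0, hbx, hsupp⟩ := B.exists_ne_zero_inner_eq_zero_of_ne b hij
  refine le_of_mul_le_mul_right ?_ (norm_pos_iff.2 hx0)
  calc (⨅ k, ‖ν k‖) * ‖x‖ ≤ ‖S x‖ :=
        C.mul_norm_le_norm_apply_of_eigenbasis hS (Real.iInf_nonneg fun _ => norm_nonneg _)
          fun k _ => ciInf_le (Finite.bddBelow_range _) k
    _ = ‖T x‖ := by rw [hST x hbx]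
    _ ≤ max ‖μ i‖ ‖μ j‖ * ‖x‖ :=
        B.norm_apply_le_mul_norm_of_eigenbasis hT (by positivity) fun k hk => by
          rcases hsupp k hk with rfl | rfl
          exacts [le_max_left _ _, le_max_right _ _]

end OrthonormalBasis

namespace Matrix

variable {n 𝕜 : Type*} [Fintype n] [DecidableEq n] [RCLike 𝕜] {A : Matrix n n 𝕜}

theorem IsHermitian.toLpLin_eigenvectorBasis (hA : A.IsHermitian) (i : n) :
    toLpLin 2 2 A (hA.eigenvectorBasis i) = (hA.eigenvalues i : 𝕜) • hA.eigenvectorBasis i := by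
  rw [toLpLin_apply, hA.mulVec_eigenvectorBasis, RCLike.real_smul_eq_coe_smul (K := 𝕜)]
  rfl

theorem IsHermitian.eigenvalues_ne_zero (hA : A.IsHermitian) (hu : IsUnit A) (i : n) :
    hA.eigenvalues i ≠ 0 := fun h =>
  (spectrum.zero_mem_iff ℝ).1 (h ▸ hA.eigenvalues_mem_spectrum_real i) hu

theorem IsHermitian.iInf_abs_eigenvalues_pos [Nonempty n] (hA : A.IsHermitian) (hu : IsUnit A) :
    0 < ⨅ i, |hA.eigenvalues i| := by
  obtain ⟨i, hi⟩ := exists_eq_ciInf_of_finite (f := fun i => |hA.eigenvalues i|)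
  exact hi ▸ abs_pos.2 (hA.eigenvalues_ne_zero hu i)

theorem toLpLin_sub_smul_vecMulVec_star_of_inner_eq_zero (A : Matrix n n 𝕜) (c : 𝕜) (b : n → 𝕜)
    {x : EuclideanSpace 𝕜 n} (hx : ⟪toLp 2 b, x⟫_𝕜 = 0) :
    toLpLin 2 2 (A - c • vecMulVec b (star b)) x = toLpLin 2 2 A x := by
  rw [EuclideanSpace.inner_eq_star_dotProduct, dotProduct_comm] at hx
  simp [toLpLin_apply, vecMulVec_mulVec, hx]

end Matrix

/-- For `ξ > 0`, the largest singular value of `Θ = A - ξ b bᴴ` is at least `λ₁` and its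
smallest singular value is at most `λ_{N-2}`; hence if `Θ` is invertible its condition
number satisfies `κ(Θ) ≥ λ₁/λ_{N-2}`. -/
theorem sr1r_cond_lower_bound {N : ℕ} (hN : 3 ≤ N)
    (A : Matrix (Fin N) (Fin N) ℂ) (hA : A.PosDef)
    (lam : Fin N → ℝ) (hlam : IsDescEigListing hA.isHermitian lam)
    (b : Fin N → ℂ)
    (ξ : ℝ)
    (Θ : Matrix (Fin N) (Fin N) ℂ)
    (hΘdef : Θ = A - (ξ : ℂ) • vecMulVec b (star b))
    (hΘ : Θ.IsHermitian) :
    lam ⟨1, by omega⟩ ≤ (⨆ i, |hΘ.eigenvalues i|) ∧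
    (⨅ i, |hΘ.eigenvalues i|) ≤ lam ⟨N - 2, by omega⟩ ∧
    (IsUnit Θ →
      lam ⟨1, by omega⟩ / lam ⟨N - 2, by omega⟩ ≤
        (⨆ i, |hΘ.eigenvalues i|) / (⨅ i, |hΘ.eigenvalues i|)) := by
  obtain ⟨hanti, e, he⟩ := hlam
  have hlam_abs : ∀ i, |hA.isHermitian.eigenvalues (e i)| = lam i := fun i => by
    rw [he, abs_of_pos (hA.eigenvalues_pos _)]
  have hΘA : ∀ x, ⟪toLp 2 b, x⟫_ℂ = 0 → toLpLin 2 2 Θ x = toLpLin 2 2 A x := fun x hx =>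
    hΘdef ▸ toLpLin_sub_smul_vecMulVec_star_of_inner_eq_zero A _ b hx
  have hA_eig := hA.isHermitian.toLpLin_eigenvectorBasis
  have hΘ_eig := hΘ.toLpLin_eigenvectorBasis
  have hsup : lam ⟨1, by omega⟩ ≤ ⨆ i, |hΘ.eigenvalues i| := by
    have := OrthonormalBasis.min_norm_le_iSup_norm_of_eqOn_orthogonal _ hA_eig hΘ_eig _ hΘA
      (e.injective.ne (show (⟨0, by omega⟩ : Fin N) ≠ ⟨1, by omega⟩ by simp))
    simp only [RCLike.norm_ofReal, hlam_abs] at this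
    rwa [min_eq_right (hanti (Fin.mk_le_mk.2 (by omega)))] at this
  have hinf : ⨅ i, |hΘ.eigenvalues i| ≤ lam ⟨N - 2, by omega⟩ := by
    have := OrthonormalBasis.iInf_norm_le_max_norm_of_eqOn_orthogonal _ hA_eig hΘ_eig _ hΘA
      (e.injective.ne (show (⟨N - 2, by omega⟩ : Fin N) ≠ ⟨N - 1, by omega⟩ by simp; omega))
    simp only [RCLike.norm_ofReal, hlam_abs] at this
    rwa [max_eq_left (hanti (Fin.mk_le_mk.2 (by omega)))] at this
  have : Nonempty (Fin N) := ⟨⟨0, by omega⟩⟩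
  have hlam₁ : 0 ≤ lam ⟨1, by omega⟩ := hlam_abs _ ▸ abs_nonneg _
  exact ⟨hsup, hinf, fun hu =>
    div_le_div₀ (hlam₁.trans hsup) hsup (hΘ.iInf_abs_eigenvalues_pos hu) hinf⟩
end
end

section
/- Let λ_0, λ, β be real numbers with 0 < λ < λ_0 and 0 < β ≤ 1. Then the quadratic equation x² − λ x − β² λ_0 (λ_0 − λ) = 0 has two real roots x_1 = (λ + √(λ² + 4β²λ_0(λ_0 − λ)))/2 and x_2 = (λ − √(λ² + 4β²λ_0(λ_0 − λ)))/2, which satisfy x_1 > 0 > x_2, |x_2| < x_1, |x_1 − β λ_0| ≤ λ, and |x_2 + β λ_0| ≤ (3/2) λ. -/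
/-!
With `s = √(l² + 4β²l0(l0 - l))` the roots are `(l ± s)/2`. Since `β² ≤ β ≤ β + β²`, the
discriminant lies between `(2βl0 - l)²` and `(2βl0 + l)²`, so `|s - 2βl0| ≤ l`; both
distance bounds on the roots follow from this single estimate.
-/

lemma half_add_sqrt_isRoot {l c s : ℝ} (hs : s ^ 2 = l ^ 2 + 4 * c) :
    ((l + s) / 2) ^ 2 - l * ((l + s) / 2) - c = 0 := by
  linear_combination hs / 4

lemma abs_sqrt_discrim_sub_le {l0 l β : ℝ} (hl : 0 ≤ l) (hl0 : 0 ≤ l0) (hβ0 : 0 ≤ β)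
    (hβ1 : β ≤ 1) :
    |Real.sqrt (l ^ 2 + 4 * β ^ 2 * l0 * (l0 - l)) - 2 * β * l0| ≤ l := by
  have hlower : |2 * β * l0 - l| ≤ Real.sqrt (l ^ 2 + 4 * β ^ 2 * l0 * (l0 - l)) :=
    Real.abs_le_sqrt <| by
      nlinarith [mul_nonneg (mul_nonneg hβ0 (sub_nonneg.2 hβ1)) (mul_nonneg hl0 hl)]
  have hupper : Real.sqrt (l ^ 2 + 4 * β ^ 2 * l0 * (l0 - l)) ≤ 2 * β * l0 + l :=
    Real.sqrt_le_iff.2 ⟨by positivity, by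
      nlinarith [mul_nonneg (mul_nonneg hβ0 (by linarith : 0 ≤ 1 + β)) (mul_nonneg hl0 hl)]⟩
  rw [abs_le]
  constructor <;> linarith [le_abs_self (2 * β * l0 - l)]

/-- For `0 < l < l0` and `0 < β ≤ 1`, the quadratic `x² - l x - β² l0 (l0 - l) = 0` has
the two real roots `x₁ = (l + √(l² + 4β²l0(l0-l)))/2 > 0 > x₂ = (l - √(l² + 4β²l0(l0-l)))/2`,
with `|x₂| < x₁`, `|x₁ - β l0| ≤ l` and `|x₂ + β l0| ≤ (3/2) l`. -/
theorem sr1r_quadratic_roots (l0 l β : ℝ)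
    (hl : 0 < l) (hll0 : l < l0) (hβ0 : 0 < β) (hβ1 : β ≤ 1)
    (x₁ x₂ : ℝ)
    (hx₁ : x₁ = (l + Real.sqrt (l ^ 2 + 4 * β ^ 2 * l0 * (l0 - l))) / 2)
    (hx₂ : x₂ = (l - Real.sqrt (l ^ 2 + 4 * β ^ 2 * l0 * (l0 - l))) / 2) :
    x₁ ^ 2 - l * x₁ - β ^ 2 * l0 * (l0 - l) = 0 ∧
    x₂ ^ 2 - l * x₂ - β ^ 2 * l0 * (l0 - l) = 0 ∧
    x₂ < 0 ∧ 0 < x₁ ∧ |x₂| < x₁ ∧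
    |x₁ - β * l0| ≤ l ∧ |x₂ + β * l0| ≤ (3 / 2) * l := by
  have hl0 : 0 < l0 := hl.trans hll0
  have hclose := abs_sqrt_discrim_sub_le hl.le hl0.le hβ0.le hβ1
  set s := Real.sqrt (l ^ 2 + 4 * β ^ 2 * l0 * (l0 - l))
  have hdiscrim : l ^ 2 < l ^ 2 + 4 * (β ^ 2 * l0 * (l0 - l)) := by
    have : 0 < β ^ 2 * l0 * (l0 - l) := by have := sub_pos.2 hll0; positivity
    linarith
  have hs2 : s ^ 2 = l ^ 2 + 4 * (β ^ 2 * l0 * (l0 - l)) :=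
    (Real.sq_sqrt (by positivity)).trans (by ring)
  have hls : l < s := (Real.lt_sqrt hl.le).2 (by linarith)
  rw [abs_le] at hclose
  subst hx₁ hx₂
  refine ⟨half_add_sqrt_isRoot hs2, ?_, by linarith, by linarith, ?_, ?_, ?_⟩
  · rw [sub_eq_add_neg l s]
    exact half_add_sqrt_isRoot (by rw [neg_sq, hs2])
  · rw [abs_of_neg (by linarith)]
    linarith
  · rw [abs_le]; constructor <;> linarith
  · rw [abs_le]; constructor <;> linarith
end
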